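/- arXiv:2111.02863 — 3 statements merged into one kernel-verified Lean document; each statement's English description precedes it below -/
import Mathlib

section
/- Let X be a real random variable and U₁, …, U_k be real random variables such that X, U₁, …, U_k are mutually independent and each U_j is symmetric about zero. Let a₁, …, a_k be real constants with Σ_{j=1}^k a_j = 0 and Σ_{j=1}^k |a_j| = 1, and define the error-prone measurements X_j* = X + U_j for j = 1, …, k. Then the random variables Σ_{j=1}^k |a_j| X_j* and X + Σ_{j=1}^k a_j X_j* are identically distributed. (In particular, the contrast-averaged proxy X̃* = Σ_j |a_j| X_j* equals in distribution the true variable X contaminated by the observable error Ũ = Σ_j a_j X_j*.) -/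
/-!
Using `∑ |a j| = 1` and `∑ a j = 0`, the two sides are `X + ∑ |a j| U j` and `X + ∑ a j U j`,
sums of independent terms. By symmetry of `U j`, the terms `|a j| U j` and `a j U j` have the same
law, and independent families with the same marginals have the same joint law, hence sums
with the same law.
-/

open MeasureTheory ProbabilityTheory

namespace ProbabilityTheory

variable {Ω Ω' ι E : Type*} {mΩ : MeasurableSpace Ω} {mΩ' : MeasurableSpace Ω'}
  {μ : Measure Ω} {ν : Measure Ω'}

lemma IdentDistrib.sum_of_iIndepFun [Fintype ι] [AddCommMonoid E] [MeasurableSpace E]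
    [MeasurableAdd₂ E] {X : ι → Ω → E} {Y : ι → Ω' → E}
    (h : ∀ i, IdentDistrib (X i) (Y i) μ ν) (hX : iIndepFun X μ) (hY : iIndepFun Y ν) :
    IdentDistrib (fun ω ↦ ∑ i, X i ω) (fun ω ↦ ∑ i, Y i ω) μ ν :=
  (IdentDistrib.pi h hX hY).comp (Finset.measurable_sum _ fun i _ ↦ measurable_pi_apply i)

lemma IdentDistrib.abs_mul_of_identDistrib_neg {Y : Ω → ℝ}
    (hY : IdentDistrib Y (fun ω ↦ -Y ω) μ μ) (c : ℝ) :
    IdentDistrib (fun ω ↦ |c| * Y ω) (fun ω ↦ c * Y ω) μ μ := by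
  rcases abs_choice c with hc | hc <;> rw [hc]
  · exact .refl (hY.aemeasurable_fst.const_mul c)
  · simpa [Function.comp_def] using hY.comp (measurable_const_mul (-c))

end ProbabilityTheory

theorem stmt2_general {Ω : Type*} [MeasurableSpace Ω] (P : Measure Ω)
    (k : ℕ) (X : Ω → ℝ) (U : Fin k → Ω → ℝ) (a : Fin k → ℝ)
    (hXmeas : Measurable X)
    (hindep : iIndepFun
      (Fin.cases X U : Fin (k + 1) → Ω → ℝ) P)
    (hsym : ∀ j, IdentDistrib (U j) (fun ω => -U j ω) P P)
    (ha0 : ∑ j, a j = 0) (ha1 : ∑ j, |a j| = 1)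
    (Xstar : Fin k → Ω → ℝ) (hXstar : ∀ j ω, Xstar j ω = X ω + U j ω) :
    IdentDistrib (fun ω => ∑ j, |a j| * Xstar j ω)
      (fun ω => X ω + ∑ j, a j * Xstar j ω) P P := by
  set b₁ : Fin (k + 1) → ℝ := Fin.cases 1 fun j ↦ |a j|
  set b₂ : Fin (k + 1) → ℝ := Fin.cases 1 a
  have hF : ∀ i, IdentDistrib (fun ω ↦ b₁ i * Fin.cases X U i ω)
      (fun ω ↦ b₂ i * Fin.cases X U i ω) P P :=
    Fin.cases (by simpa [b₁, b₂] using IdentDistrib.refl hXmeas.aemeasurable)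
      fun j ↦ by simpa [b₁, b₂] using (hsym j).abs_mul_of_identDistrib_neg (a j)
  have hsum := IdentDistrib.sum_of_iIndepFun hF
    (hindep.comp _ fun i ↦ measurable_const_mul (b₁ i))
    (hindep.comp _ fun i ↦ measurable_const_mul (b₂ i))
  convert hsum using 2 with ω ω
  · simp [b₁, Fin.sum_univ_succ, hXstar, mul_add, Finset.sum_add_distrib, ← Finset.sum_mul, ha1]
  · simp [b₂, Fin.sum_univ_succ, hXstar, mul_add, Finset.sum_add_distrib, ← Finset.sum_mul, ha0]

/-- In the additive measurement error model with replicates `Xstar j = X + U j`,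
where `X, U 1, …, U k` are mutually independent and each error `U j` is symmetric
about zero, if the contrast `a` satisfies `∑ j, a j = 0` and `∑ j, |a j| = 1`, then
`∑ j, |a j| * Xstar j` and `X + ∑ j, a j * Xstar j` are identically distributed. -/
theorem stmt2 {Ω : Type*} [MeasurableSpace Ω] (P : Measure Ω) [IsProbabilityMeasure P]
    (k : ℕ) (X : Ω → ℝ) (U : Fin k → Ω → ℝ) (a : Fin k → ℝ)
    (hXmeas : Measurable X) (hUmeas : ∀ j, Measurable (U j))
    (hindep : iIndepFun
      (Fin.cases X U : Fin (k + 1) → Ω → ℝ) P)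
    (hsym : ∀ j, IdentDistrib (U j) (fun ω => -U j ω) P P)
    (ha0 : ∑ j, a j = 0) (ha1 : ∑ j, |a j| = 1)
    (Xstar : Fin k → Ω → ℝ) (hXstar : ∀ j ω, Xstar j ω = X ω + U j ω) :
    IdentDistrib (fun ω => ∑ j, |a j| * Xstar j ω)
      (fun ω => X ω + ∑ j, a j * Xstar j ω) P P :=
  stmt2_general P k X U a hXmeas hindep hsym ha0 ha1 Xstar hXstar
end

section
/- Let X, W₀, W₁, …, W_n be mutually independent real random variables, where W₀, …, W_n are identically distributed, symmetric about zero, with variance σ² and finite fourth moment m₄ = E[W₀⁴], and X has finite fourth moment. Write μ₂ = E[X²] and μ₄ = E[X⁴]. Then for every nonnegative integer n, E[(X + Σ_{j=0}^n W_j)⁴] = μ₄ + 6μ₂(1 + n)σ² + (n + 1)m₄ + 3(n + 1)n σ⁴. Consequently, the quadratic polynomial g(λ) = μ₄ + 6μ₂(1 + λ)σ² + (1 + λ)m₄ + 3(1 + λ)λσ⁴, which agrees with this expectation at every nonnegative integer λ = n, satisfies g(−1) = μ₄, regardless of the value of m₄. -/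
/-!
Expand `(S + W)⁴` binomially, where `S` is a partial sum and `W` a fresh error independent of it:
independence factors every mixed moment, and symmetry kills the odd moments of `W`, so adding one
error raises `E[S²]` by `σ²` and `E[S⁴]` by `6σ²E[S²] + m₄`. Induction on the number of errors gives
the closed form, and every term except `μ₄` carries the factor `1 + λ`, which vanishes at `λ = -1`.
-/

open MeasureTheory ProbabilityTheory Finset

namespace MeasureTheory

lemma MemLp.integrable_pow_of_le {Ω : Type*} [MeasurableSpace Ω] {μ : Measure Ω}
    [IsFiniteMeasure μ] {f : Ω → ℝ} {p k : ℕ} (hf : MemLp f p μ) (hk : k ≤ p) :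
    Integrable (fun ω => f ω ^ k) μ := by
  have hmeas : AEStronglyMeasurable (fun ω => f ω ^ k) μ :=
    (hf.aestronglyMeasurable.aemeasurable.pow_const k).aestronglyMeasurable
  refine (integrable_norm_iff hmeas).1 ?_
  simpa only [norm_pow] using (hf.mono_exponent (by exact_mod_cast hk)).integrable_norm_pow'

end MeasureTheory

namespace ProbabilityTheory

variable {Ω : Type*} [MeasurableSpace Ω] {μ : Measure Ω}

lemma IdentDistrib.integral_pow_eq_zero_of_odd {X : Ω → ℝ}
    (hX : IdentDistrib X (fun ω => -X ω) μ μ) {k : ℕ} (hk : Odd k) :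
    ∫ ω, X ω ^ k ∂μ = 0 := by
  have h := (hX.comp (measurable_id.pow_const k)).integral_eq
  simp only [Function.comp_def, id_eq, hk.neg_pow, integral_neg] at h
  linarith

lemma IndepFun.integral_add_pow [IsFiniteMeasure μ] {U V : Ω → ℝ} (hUV : IndepFun U V μ)
    {n : ℕ} (hU : MemLp U n μ) (hV : MemLp V n μ) :
    ∫ ω, (U ω + V ω) ^ n ∂μ =
      ∑ m ∈ range (n + 1), (∫ ω, U ω ^ m ∂μ) * (∫ ω, V ω ^ (n - m) ∂μ) * n.choose m := by
  have hpow (m : ℕ) : IndepFun (fun ω => U ω ^ m) (fun ω => V ω ^ (n - m)) μ :=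
    hUV.comp (φ := fun x => x ^ m) (ψ := fun x => x ^ (n - m)) (by fun_prop) (by fun_prop)
  simp_rw [add_pow]
  have hUm {m : ℕ} (hm : m ∈ range (n + 1)) : Integrable (fun ω => U ω ^ m) μ :=
    hU.integrable_pow_of_le (mem_range_succ_iff.1 hm)
  have hVm (m : ℕ) : Integrable (fun ω => V ω ^ (n - m)) μ :=
    hV.integrable_pow_of_le (Nat.sub_le n m)
  have hprod {m : ℕ} (hm : m ∈ range (n + 1)) :
      Integrable (fun ω => U ω ^ m * V ω ^ (n - m)) μ :=
    (hpow m).integrable_mul (hUm hm) (hVm m)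
  rw [integral_finsetSum _ fun m hm => (hprod hm).mul_const _]
  refine sum_congr rfl fun m hm => ?_
  rw [integral_mul_const, (hpow m).integral_fun_mul_eq_mul_integral
    (hUm hm).aestronglyMeasurable (hVm m).aestronglyMeasurable]

lemma IndepFun.integral_add_sq [IsProbabilityMeasure μ] {U V : Ω → ℝ} (hUV : IndepFun U V μ)
    (hU : MemLp U 2 μ) (hV : MemLp V 2 μ) (hV1 : ∫ ω, V ω ∂μ = 0) :
    ∫ ω, (U ω + V ω) ^ 2 ∂μ = ∫ ω, U ω ^ 2 ∂μ + ∫ ω, V ω ^ 2 ∂μ := by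
  rw [hUV.integral_add_pow (n := 2) (mod_cast hU) (mod_cast hV)]
  simp [sum_range_succ, hV1, add_comm]

lemma IndepFun.integral_add_pow_four [IsProbabilityMeasure μ] {U V : Ω → ℝ}
    (hUV : IndepFun U V μ) (hU : MemLp U 4 μ) (hV : MemLp V 4 μ)
    (hV1 : ∫ ω, V ω ∂μ = 0) (hV3 : ∫ ω, V ω ^ 3 ∂μ = 0) :
    ∫ ω, (U ω + V ω) ^ 4 ∂μ =
      ∫ ω, U ω ^ 4 ∂μ + 6 * (∫ ω, U ω ^ 2 ∂μ) * (∫ ω, V ω ^ 2 ∂μ) + ∫ ω, V ω ^ 4 ∂μ := by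
  rw [hUV.integral_add_pow (n := 4) (mod_cast hU) (mod_cast hV)]
  simp only [sum_range_succ, range_one, sum_singleton, pow_zero, pow_one, integral_const,
    probReal_univ, smul_eq_mul, hV1, hV3, Nat.choose, Nat.reduceAdd, Nat.reduceSub, Nat.cast_ofNat]
  ring

lemma iIndepFun.indepFun_add_sum_of_notMem {m : ℕ} {X : Ω → ℝ} {W : Fin m → Ω → ℝ}
    (hind : iIndepFun (Fin.cases X W : Fin (m + 1) → Ω → ℝ) μ)
    (hX : AEMeasurable X μ) (hW : ∀ j, AEMeasurable (W j) μ)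
    {s : Finset (Fin m)} {j : Fin m} (hj : j ∉ s) :
    IndepFun (fun ω => X ω + ∑ i ∈ s, W i ω) (W j) μ := by
  have h0 : (0 : Fin (m + 1)) ∉ s.map (Fin.succEmb m) := by simp [Fin.succ_ne_zero]
  have hsucc : j.succ ∉ cons 0 (s.map (Fin.succEmb m)) h0 := by simp [hj, Fin.succ_ne_zero]
  convert hind.indepFun_finsetSum_of_notMem₀ (Fin.cases hX hW) hsucc using 1
  · funext ω
    simp [Finset.sum_apply]
  · rfl

section PartialSums

variable [IsProbabilityMeasure μ] {ι : Type*} [DecidableEq ι] {X : Ω → ℝ} {W : ι → Ω → ℝ}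
  {σ2 m4 : ℝ}

lemma integral_add_sum_sq
    (hind : ∀ (s : Finset ι) (j : ι), j ∉ s → IndepFun (fun ω => X ω + ∑ i ∈ s, W i ω) (W j) μ)
    (hX : MemLp X 2 μ) (hW : ∀ j, MemLp (W j) 2 μ)
    (hW1 : ∀ j, ∫ ω, W j ω ∂μ = 0) (hW2 : ∀ j, ∫ ω, W j ω ^ 2 ∂μ = σ2) (s : Finset ι) :
    ∫ ω, (X ω + ∑ i ∈ s, W i ω) ^ 2 ∂μ = ∫ ω, X ω ^ 2 ∂μ + #s * σ2 := by
  induction s using Finset.induction_on with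
  | empty => simp
  | insert j s hj ih =>
    have hsplit (ω : Ω) : X ω + ∑ i ∈ insert j s, W i ω = (X ω + ∑ i ∈ s, W i ω) + W j ω := by
      rw [sum_insert hj]; ring
    have hS : MemLp (fun ω => X ω + ∑ i ∈ s, W i ω) 2 μ :=
      hX.add (memLp_finsetSum s fun i _ => hW i)
    simp only [hsplit, (hind s j hj).integral_add_sq hS (hW j) (hW1 j), ih, hW2,
      card_insert_of_notMem hj]
    push_cast
    ring

lemma integral_add_sum_pow_four
    (hind : ∀ (s : Finset ι) (j : ι), j ∉ s → IndepFun (fun ω => X ω + ∑ i ∈ s, W i ω) (W j) μ)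
    (hX : MemLp X 4 μ) (hW : ∀ j, MemLp (W j) 4 μ)
    (hW1 : ∀ j, ∫ ω, W j ω ∂μ = 0) (hW2 : ∀ j, ∫ ω, W j ω ^ 2 ∂μ = σ2)
    (hW3 : ∀ j, ∫ ω, W j ω ^ 3 ∂μ = 0) (hW4 : ∀ j, ∫ ω, W j ω ^ 4 ∂μ = m4) (s : Finset ι) :
    ∫ ω, (X ω + ∑ i ∈ s, W i ω) ^ 4 ∂μ =
      ∫ ω, X ω ^ 4 ∂μ + 6 * (∫ ω, X ω ^ 2 ∂μ) * #s * σ2 + #s * m4 +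
        3 * #s * (#s - 1) * σ2 ^ 2 := by
  induction s using Finset.induction_on with
  | empty => simp
  | insert j s hj ih =>
    have hsplit (ω : Ω) : X ω + ∑ i ∈ insert j s, W i ω = (X ω + ∑ i ∈ s, W i ω) + W j ω := by
      rw [sum_insert hj]; ring
    have hS : MemLp (fun ω => X ω + ∑ i ∈ s, W i ω) 4 μ :=
      hX.add (memLp_finsetSum s fun i _ => hW i)
    have h2 := integral_add_sum_sq hind (hX.mono_exponent (by norm_num))
      (fun j => (hW j).mono_exponent (by norm_num)) hW1 hW2 s
    simp only [hsplit, (hind s j hj).integral_add_pow_four hS (hW j) (hW1 j) (hW3 j), ih, h2,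
      hW2, hW4, card_insert_of_notMem hj]
    push_cast
    ring

end PartialSums

end ProbabilityTheory

theorem stmt8_general {Ω : Type*} [MeasurableSpace Ω] (P : Measure Ω) [IsProbabilityMeasure P]
    (n : ℕ) (σ2 m4 μ2 μ4 : ℝ)
    (X : Ω → ℝ) (W : Fin (n + 1) → Ω → ℝ)
    (hindep : iIndepFun
      (Fin.cases X W : Fin (n + 2) → Ω → ℝ) P)
    (hsym : ∀ j, IdentDistrib (W j) (fun ω => -W j ω) P P)
    (hX4 : MemLp X 4 P) (hW4 : ∀ j, MemLp (W j) 4 P)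
    (hvar : ∀ j, variance (W j) P = σ2)
    (hm4 : ∀ j, ∫ ω, W j ω ^ 4 ∂P = m4)
    (hμ2 : ∫ ω, X ω ^ 2 ∂P = μ2) (hμ4 : ∫ ω, X ω ^ 4 ∂P = μ4)
    (g : ℝ → ℝ)
    (hg : ∀ l : ℝ, g l = μ4 + 6 * μ2 * (1 + l) * σ2 + (1 + l) * m4 + 3 * (1 + l) * l * σ2 ^ 2) :
    (∫ ω, (X ω + ∑ j, W j ω) ^ 4 ∂P =
      μ4 + 6 * μ2 * (1 + (n : ℝ)) * σ2 + ((n : ℝ) + 1) * m4 +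
        3 * ((n : ℝ) + 1) * (n : ℝ) * σ2 ^ 2) ∧
    g (-1) = μ4 := by
  have hW1 (j : Fin (n + 1)) : ∫ ω, W j ω ∂P = 0 := by
    simpa using (hsym j).integral_pow_eq_zero_of_odd odd_one
  have hW2 (j : Fin (n + 1)) : ∫ ω, W j ω ^ 2 ∂P = σ2 := by
    rw [← hvar j, variance_of_integral_eq_zero (hW4 j).aestronglyMeasurable.aemeasurable (hW1 j)]
  have hW3 (j : Fin (n + 1)) : ∫ ω, W j ω ^ 3 ∂P = 0 :=
    (hsym j).integral_pow_eq_zero_of_odd (by decide)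
  have hind (s : Finset (Fin (n + 1))) (j : Fin (n + 1)) (hj : j ∉ s) :
      IndepFun (fun ω => X ω + ∑ i ∈ s, W i ω) (W j) P :=
    hindep.indepFun_add_sum_of_notMem hX4.aestronglyMeasurable.aemeasurable
      (fun i => (hW4 i).aestronglyMeasurable.aemeasurable) hj
  refine ⟨?_, by rw [hg]; ring⟩
  rw [integral_add_sum_pow_four hind hX4 hW4 hW1 hW2 hW3 hm4, card_univ, Fintype.card_fin,
    hμ2, hμ4]
  push_cast
  ring

/-- NP-SIMEX computation for the fourth moment: if `X, W 0, …, W n` are mutually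
independent, the `W j` are identically distributed, symmetric about zero, with
variance `σ²` and fourth moment `m₄`, and `X` has finite fourth moment with
`μ₂ = E[X²]`, `μ₄ = E[X⁴]`, then
`E[(X + ∑_{j=0}^n W j)⁴] = μ₄ + 6μ₂(1+n)σ² + (n+1)m₄ + 3(n+1)n σ⁴`, and the
quadratic extrapolant `g(λ) = μ₄ + 6μ₂(1+λ)σ² + (1+λ)m₄ + 3(1+λ)λσ⁴` satisfies
`g(-1) = μ₄`, regardless of the value of `m₄`. -/
theorem stmt8 {Ω : Type*} [MeasurableSpace Ω] (P : Measure Ω) [IsProbabilityMeasure P]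
    (n : ℕ) (σ2 m4 μ2 μ4 : ℝ)
    (X : Ω → ℝ) (W : Fin (n + 1) → Ω → ℝ)
    (hXmeas : Measurable X) (hWmeas : ∀ j, Measurable (W j))
    (hindep : iIndepFun
      (Fin.cases X W : Fin (n + 2) → Ω → ℝ) P)
    (hident : ∀ j j', IdentDistrib (W j) (W j') P P)
    (hsym : ∀ j, IdentDistrib (W j) (fun ω => -W j ω) P P)
    (hX4 : MemLp X 4 P) (hW4 : ∀ j, MemLp (W j) 4 P)
    (hvar : ∀ j, variance (W j) P = σ2)
    (hm4 : ∀ j, ∫ ω, W j ω ^ 4 ∂P = m4)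
    (hμ2 : ∫ ω, X ω ^ 2 ∂P = μ2) (hμ4 : ∫ ω, X ω ^ 4 ∂P = μ4)
    (g : ℝ → ℝ)
    (hg : ∀ l : ℝ, g l = μ4 + 6 * μ2 * (1 + l) * σ2 + (1 + l) * m4 + 3 * (1 + l) * l * σ2 ^ 2) :
    (∫ ω, (X ω + ∑ j, W j ω) ^ 4 ∂P =
      μ4 + 6 * μ2 * (1 + (n : ℝ)) * σ2 + ((n : ℝ) + 1) * m4 +
        3 * ((n : ℝ) + 1) * (n : ℝ) * σ2 ^ 2) ∧
    g (-1) = μ4 :=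
  stmt8_general P n σ2 m4 μ2 μ4 X W hindep hsym hX4 hW4 hvar hm4 hμ2 hμ4 g hg
end

section
/- Let X, W, N be mutually independent real random variables, where W is symmetric about zero with variance σ² and finite fourth moment m₄ = E[W⁴], N is Gaussian with mean 0 and variance λσ² for some λ ≥ 0, and X has finite fourth moment. Write μ₂ = E[X²] and μ₄ = E[X⁴]. Then E[(X + W + N)⁴] = μ₄ + 6μ₂(1 + λ)σ² + m₄ + 6λσ⁴ + 3λ²σ⁴. Consequently the quadratic polynomial h(λ) = μ₄ + 6μ₂(1 + λ)σ² + m₄ + 6λσ⁴ + 3λ²σ⁴ that matches this expectation for all λ ≥ 0 satisfies h(−1) = μ₄ + m₄ − 3σ⁴; thus the parametric SIMEX extrapolation leaves residual asymptotic bias m₄ − 3σ⁴, which vanishes exactly when m₄ = 3σ⁴ (as for Gaussian errors). -/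
/-!
Expanding `(Y + Z)⁴` binomially and factoring the expectation of each term over the independent
summands, the terms with an odd power of a centred symmetric `Z` vanish, leaving
`E(Y + Z)⁴ = EY⁴ + 6 EY² EZ² + EZ⁴`. This is applied first to `X + W` (symmetry of `W` kills
its odd moments) and then to `(X + W) + N`. The Gaussian moments `E N² = λσ²`, `E N⁴ = 3(λσ²)²`
are the derivatives at `0` of the moment generating function `exp (λσ² t² / 2)`.
-/

open MeasureTheory ProbabilityTheory
open scoped NNReal

section Moments

variable {Ω : Type*} [MeasurableSpace Ω] {P : Measure Ω}

lemma MeasureTheory.MemLp.integrable_pow_of_le_s9 [IsFiniteMeasure P] {f : Ω → ℝ} {n k : ℕ}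
    (hf : MemLp f n P) (hk : k ≤ n) : Integrable (fun ω => f ω ^ k) P := by
  have hk' : MemLp f k P := hf.mono_exponent (by exact_mod_cast hk)
  refine (integrable_norm_iff (hf.aestronglyMeasurable.pow k)).1 ?_
  simpa only [Pi.pow_apply, norm_pow] using hk'.integrable_norm_pow'

lemma ProbabilityTheory.IndepFun.integral_add_pow_s9 [IsFiniteMeasure P] {Y Z : Ω → ℝ}
    (hYZ : IndepFun Y Z P) {n : ℕ} (hY : MemLp Y n P) (hZ : MemLp Z n P) :
    ∫ ω, (Y ω + Z ω) ^ n ∂P =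
      ∑ k ∈ Finset.range (n + 1), (∫ ω, Y ω ^ k ∂P) * (∫ ω, Z ω ^ (n - k) ∂P) * n.choose k := by
  have hpow : ∀ k ∈ Finset.range (n + 1),
      IndepFun (fun ω => Y ω ^ k) (fun ω => Z ω ^ (n - k)) P := fun k _ =>
    hYZ.comp (measurable_id.pow_const k) (measurable_id.pow_const (n - k))
  simp_rw [add_pow]
  rw [integral_finsetSum]
  · refine Finset.sum_congr rfl fun k hk => ?_
    rw [integral_mul_const, (hpow k hk).integral_fun_mul_eq_mul_integral
      (hY.aestronglyMeasurable.pow k) (hZ.aestronglyMeasurable.pow (n - k))]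
  · intro k hk
    refine Integrable.mul_const ?_ _
    exact (hpow k hk).integrable_mul (hY.integrable_pow_of_le_s9 (Finset.mem_range_succ_iff.1 hk))
      (hZ.integrable_pow_of_le_s9 (Nat.sub_le n k))

lemma ProbabilityTheory.IndepFun.integral_add_sq_of_integral_eq_zero [IsProbabilityMeasure P]
    {Y Z : Ω → ℝ} (hYZ : IndepFun Y Z P) (hY : MemLp Y 2 P) (hZ : MemLp Z 2 P)
    (hZ1 : ∫ ω, Z ω ∂P = 0) :
    ∫ ω, (Y ω + Z ω) ^ 2 ∂P = ∫ ω, Y ω ^ 2 ∂P + ∫ ω, Z ω ^ 2 ∂P := by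
  rw [hYZ.integral_add_pow_s9 (n := 2) hY hZ]
  norm_num [Finset.sum_range_succ, hZ1]
  ring

lemma ProbabilityTheory.IndepFun.integral_add_pow_four_of_integral_eq_zero
    [IsProbabilityMeasure P] {Y Z : Ω → ℝ} (hYZ : IndepFun Y Z P) (hY : MemLp Y 4 P)
    (hZ : MemLp Z 4 P) (hZ1 : ∫ ω, Z ω ∂P = 0) (hZ3 : ∫ ω, Z ω ^ 3 ∂P = 0) :
    ∫ ω, (Y ω + Z ω) ^ 4 ∂P =
      ∫ ω, Y ω ^ 4 ∂P + 6 * (∫ ω, Y ω ^ 2 ∂P) * (∫ ω, Z ω ^ 2 ∂P) + ∫ ω, Z ω ^ 4 ∂P := by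
  rw [hYZ.integral_add_pow_s9 (n := 4) hY hZ]
  norm_num [Finset.sum_range_succ, Nat.choose, hZ1, hZ3]
  ring

lemma ProbabilityTheory.IdentDistrib.integral_pow_eq_zero_of_odd_s9 {W : Ω → ℝ}
    (hW : IdentDistrib W (fun ω => -W ω) P P) {k : ℕ} (hk : Odd k) : ∫ ω, W ω ^ k ∂P = 0 := by
  have h := (hW.comp (measurable_id.pow_const k)).integral_eq
  simp only [Function.comp_def, id, hk.neg_pow, integral_neg] at h
  linarith

end Moments

section GaussianMoments

open Polynomial

/-- `(q · e)' = (expSqDerivStep c q) · e` for `e t = exp (c t² / 2)`. -/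
noncomputable def expSqDerivStep (c : ℝ) (q : ℝ[X]) : ℝ[X] := derivative q + C c * X * q

lemma iteratedDeriv_eval_mul_exp_sq (c : ℝ) (n : ℕ) (p : ℝ[X]) :
    iteratedDeriv n (fun t => p.eval t * Real.exp (c * t ^ 2 / 2)) =
      fun t => ((expSqDerivStep c)^[n] p).eval t * Real.exp (c * t ^ 2 / 2) := by
  induction n generalizing p with
  | zero => simp
  | succ n ih =>
    rw [iteratedDeriv_succ', Function.iterate_succ_apply, ← ih]
    congr 1
    ext t
    have hexp : HasDerivAt (fun t => c * t ^ 2 / 2) (c * t) t :=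
      (((hasDerivAt_pow 2 t).const_mul c).div_const 2).congr_deriv (by push_cast; ring)
    rw [((p.hasDerivAt t).fun_mul hexp.exp).deriv, expSqDerivStep]
    simp only [eval_add, eval_mul, eval_C, eval_X]
    ring

lemma integral_pow_gaussianReal (v : ℝ≥0) (n : ℕ) :
    ∫ x, x ^ n ∂gaussianReal 0 v = ((expSqDerivStep v)^[n] 1).eval 0 := by
  have hmgf := iteratedDeriv_mgf_zero (X := fun x : ℝ => x) (μ := gaussianReal 0 v) (by simp) n
  simp only [Pi.pow_apply] at hmgf
  rw [← hmgf, mgf_fun_id_gaussianReal]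
  simpa using congrFun (iteratedDeriv_eval_mul_exp_sq v n 1) 0

lemma integral_sq_gaussianReal (v : ℝ≥0) : ∫ x, x ^ 2 ∂gaussianReal 0 v = v := by
  simp [integral_pow_gaussianReal, expSqDerivStep, Function.iterate_succ_apply']

lemma integral_pow_three_gaussianReal (v : ℝ≥0) : ∫ x, x ^ 3 ∂gaussianReal 0 v = 0 := by
  simp [integral_pow_gaussianReal, expSqDerivStep, Function.iterate_succ_apply']

lemma integral_pow_four_gaussianReal (v : ℝ≥0) :
    ∫ x, x ^ 4 ∂gaussianReal 0 v = 3 * (v : ℝ) ^ 2 := by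
  simp [integral_pow_gaussianReal, expSqDerivStep, Function.iterate_succ_apply']
  ring

end GaussianMoments

/-- P-SIMEX computation for the fourth moment: if `X, W, N` are mutually independent,
`W` is symmetric about zero with variance `σ²` and fourth moment `m₄`, `N` is Gaussian
with mean `0` and variance `λσ²` (`λ ≥ 0`), and `X` has finite fourth moment with
`μ₂ = E[X²]`, `μ₄ = E[X⁴]`, then
`E[(X + W + N)⁴] = μ₄ + 6μ₂(1+λ)σ² + m₄ + 6λσ⁴ + 3λ²σ⁴`, and the quadratic
extrapolant `h(λ)` matching this for all `λ ≥ 0` satisfies `h(-1) = μ₄ + m₄ - 3σ⁴`;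
the residual bias `m₄ - 3σ⁴` vanishes exactly when `m₄ = 3σ⁴`. -/
theorem stmt9 {Ω : Type*} [MeasurableSpace Ω] (P : Measure Ω) [IsProbabilityMeasure P]
    (lam σ2 m4 μ2 μ4 : ℝ) (hlam : 0 ≤ lam) (hσ2 : 0 ≤ σ2)
    (X W N : Ω → ℝ)
    (hXmeas : Measurable X) (hWmeas : Measurable W) (hNmeas : Measurable N)
    (hindep : iIndepFun ![X, W, N] P)
    (hsym : IdentDistrib W (fun ω => -W ω) P P)
    (hX4 : MemLp X 4 P) (hW4 : MemLp W 4 P)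
    (hvar : variance W P = σ2)
    (hm4 : ∫ ω, W ω ^ 4 ∂P = m4)
    (hgauss : Measure.map N P = gaussianReal 0 (Real.toNNReal (lam * σ2)))
    (hμ2 : ∫ ω, X ω ^ 2 ∂P = μ2) (hμ4 : ∫ ω, X ω ^ 4 ∂P = μ4)
    (h : ℝ → ℝ)
    (hh : ∀ l : ℝ, h l = μ4 + 6 * μ2 * (1 + l) * σ2 + m4 + 6 * l * σ2 ^ 2 + 3 * l ^ 2 * σ2 ^ 2) :
    (∫ ω, (X ω + W ω + N ω) ^ 4 ∂P =
      μ4 + 6 * μ2 * (1 + lam) * σ2 + m4 + 6 * lam * σ2 ^ 2 + 3 * lam ^ 2 * σ2 ^ 2) ∧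
    h (-1) = μ4 + m4 - 3 * σ2 ^ 2 ∧
    (m4 - 3 * σ2 ^ 2 = 0 ↔ m4 = 3 * σ2 ^ 2) := by
  refine ⟨?_, by rw [hh]; ring, sub_eq_zero⟩
  have hmeas : ∀ i, Measurable (![X, W, N] i) := by
    intro i; fin_cases i <;> assumption
  have hXW : IndepFun X W P := hindep.indepFun (i := 0) (j := 1) (by decide)
  have hXWN : IndepFun (X + W) N P := hindep.indepFun_add_left hmeas 0 1 2 (by decide) (by decide)
  have hW1 : ∫ ω, W ω ∂P = 0 := by simpa using hsym.integral_pow_eq_zero_of_odd_s9 odd_one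
  have hW2 : ∫ ω, W ω ^ 2 ∂P = σ2 := by
    rw [← hvar, variance_of_integral_eq_zero hWmeas.aemeasurable hW1]
  have hNmom (k : ℕ) : ∫ ω, N ω ^ k ∂P = ∫ x, x ^ k ∂gaussianReal 0 (lam * σ2).toNNReal := by
    rw [← hgauss, integral_map hNmeas.aemeasurable (by fun_prop)]
  have hN4 : MemLp N 4 P := (memLp_map_measure_iff aestronglyMeasurable_id hNmeas.aemeasurable).1
    (hgauss ▸ memLp_id_gaussianReal 4)
  have hv : ((lam * σ2).toNNReal : ℝ) = lam * σ2 := Real.coe_toNNReal _ (mul_nonneg hlam hσ2)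
  calc ∫ ω, (X ω + W ω + N ω) ^ 4 ∂P
      = ∫ ω, (X ω + W ω) ^ 4 ∂P + 6 * (∫ ω, (X ω + W ω) ^ 2 ∂P) * (∫ ω, N ω ^ 2 ∂P)
          + ∫ ω, N ω ^ 4 ∂P :=
        hXWN.integral_add_pow_four_of_integral_eq_zero (hX4.add hW4) hN4
          (by simpa using hNmom 1) ((hNmom 3).trans (integral_pow_three_gaussianReal _))
    _ = (μ4 + 6 * μ2 * σ2 + m4) + 6 * (μ2 + σ2) * (lam * σ2) + 3 * (lam * σ2) ^ 2 := by
        rw [hXW.integral_add_pow_four_of_integral_eq_zero hX4 hW4 hW1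
            (hsym.integral_pow_eq_zero_of_odd_s9 (by decide)),
          hXW.integral_add_sq_of_integral_eq_zero (hX4.mono_exponent (by norm_num))
            (hW4.mono_exponent (by norm_num)) hW1,
          hNmom, hNmom, integral_sq_gaussianReal, integral_pow_four_gaussianReal, hv,
          hμ4, hμ2, hW2, hm4]
    _ = μ4 + 6 * μ2 * (1 + lam) * σ2 + m4 + 6 * lam * σ2 ^ 2 + 3 * lam ^ 2 * σ2 ^ 2 := by ring
end
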